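/- Two-point stationary states, coupled case, part (c): assume D^{(12)} ≠ 0. There exist a two-species distribution ρ and indices ι ≠ κ ∈ {1,2} such that ρ^{(1)}(x_ι) = ρ^{(2)}(x_ι) = 0 (so both species have full mass at x_κ) and v^{(1)}_{ικ} > 0, v^{(2)}_{ικ} > 0, if and only if D^{(11)} < −D^{(12)} and D^{(22)} < −D^{(12)}. In that case the distribution is ρ^{(1)}(x_κ) = ρ^{(2)}(x_κ) = 1, and both choices of the aggregation vertex x_κ yield such a distribution. -/

import Mathlib

open Finset

/-- The velocity `v^{(i)}_{ικ}` on the two-point space; `ρ k l` denotes the vertex *mass*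
`ρ^{(k)}(x_l)`, so that `∑_λ (ΔK) ρ^{(k)}_λ μ_λ = ∑_l (ΔK) ρ k l`. -/
noncomputable def vel2 {d : ℕ} (x : Fin 2 → EuclideanSpace ℝ (Fin d))
    (K : Fin 2 → Fin 2 → EuclideanSpace ℝ (Fin d) → EuclideanSpace ℝ (Fin d) → ℝ)
    (ρ : Fin 2 → Fin 2 → ℝ) (i ι κ : Fin 2) : ℝ :=
  ∑ k : Fin 2, ∑ l : Fin 2, (K i k (x ι) (x l) - K i k (x κ) (x l)) * ρ k l

/-- A two-species distribution on the two-point space, in terms of the vertex masses. -/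
def IsDist2 (ρ : Fin 2 → Fin 2 → ℝ) : Prop :=
  (∀ i ι, 0 ≤ ρ i ι) ∧ ∀ i, ρ i 0 + ρ i 1 = 1

/-! When both species sit at `x_κ`, only the terms `λ = κ` of the velocity survive, and each
of them equals `K^{(ik)}(x_ι,x_κ) − K^{(ik)}(x_κ,x_κ) = −D^{(ik)}` by symmetry and the constant
diagonal. Hence `v^{(i)}_{ικ} = −D^{(i1)} − D^{(i2)}`, and with `D^{(21)} = D^{(12)}` the two
positivity conditions become `D^{(11)} < −D^{(12)}` and `D^{(22)} < −D^{(12)}`. -/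

lemma Fin.sum_univ_two_of_ne {M : Type*} [AddCommMonoid M] {ι κ : Fin 2} (hικ : ι ≠ κ)
    (g : Fin 2 → M) : ∑ l, g l = g ι + g κ := by
  fin_cases ι <;> fin_cases κ <;> simp_all [Fin.sum_univ_two, add_comm]

lemma IsDist2.eq_one_of_eq_zero {ρ : Fin 2 → Fin 2 → ℝ} (hρ : IsDist2 ρ) {ι κ : Fin 2}
    (hικ : ι ≠ κ) {i : Fin 2} (hι : ρ i ι = 0) : ρ i κ = 1 := by
  have := hρ.2 i
  rwa [← Fin.sum_univ_two, Fin.sum_univ_two_of_ne hικ, hι, zero_add] at this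

lemma isDist2_single (κ : Fin 2) : IsDist2 fun _ => Pi.single κ 1 :=
  ⟨fun _ l => by by_cases h : l = κ <;> simp [h], fun _ => by fin_cases κ <;> simp⟩

lemma sub_diag_eq_neg_of_ne {E : Type*} {f : E → E → ℝ} (hsymm : ∀ p q, f p q = f q p)
    (hdiag : ∀ p q, f p p = f q q) (x : Fin 2 → E) {ι κ : Fin 2} (hικ : ι ≠ κ) :
    f (x ι) (x κ) - f (x κ) (x κ) = -(f (x 0) (x 0) - f (x 0) (x 1)) := by
  obtain ⟨rfl, rfl⟩ | ⟨rfl, rfl⟩ : ι = 0 ∧ κ = 1 ∨ ι = 1 ∧ κ = 0 := by omega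
  · rw [hdiag (x 1) (x 0)]; ring
  · rw [hsymm]; ring

lemma vel2_of_aggregated {d : ℕ} {x : Fin 2 → EuclideanSpace ℝ (Fin d)}
    {K : Fin 2 → Fin 2 → EuclideanSpace ℝ (Fin d) → EuclideanSpace ℝ (Fin d) → ℝ}
    (hKsym : ∀ i k p q, K i k p q = K i k q p)
    (hKdiag : ∀ i k : Fin 2, ∀ p q : EuclideanSpace ℝ (Fin d), K i k p p = K i k q q)
    {ρ : Fin 2 → Fin 2 → ℝ} {ι κ : Fin 2} (hικ : ι ≠ κ)
    (hι : ∀ k, ρ k ι = 0) (hκ : ∀ k, ρ k κ = 1) (i : Fin 2) :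
    vel2 x K ρ i ι κ = -∑ k, (K i k (x 0) (x 0) - K i k (x 0) (x 1)) := by
  simp only [vel2, Fin.sum_univ_two_of_ne hικ, hι, hκ, mul_zero, mul_one, zero_add,
    sub_diag_eq_neg_of_ne (hKsym i _) (hKdiag i _) x hικ, neg_add]

theorem two_point_stationary_coupled_c_general
    (d : ℕ) (x : Fin 2 → EuclideanSpace ℝ (Fin d))
    (K : Fin 2 → Fin 2 → EuclideanSpace ℝ (Fin d) → EuclideanSpace ℝ (Fin d) → ℝ)
    (hKsym : ∀ i k p q, K i k p q = K i k q p)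
    (hK12 : ∀ p q, K 0 1 p q = K 1 0 p q)
    (hKdiag : ∀ i k : Fin 2, ∀ p q : EuclideanSpace ℝ (Fin d), K i k p p = K i k q q)
    (D : Fin 2 → Fin 2 → ℝ)
    (hD : ∀ i k, D i k = K i k (x 0) (x 0) - K i k (x 0) (x 1)) :
    ((∃ ρ, IsDist2 ρ ∧ ∃ ι κ : Fin 2, ι ≠ κ ∧
        ρ 0 ι = 0 ∧ ρ 1 ι = 0 ∧ 0 < vel2 x K ρ 0 ι κ ∧ 0 < vel2 x K ρ 1 ι κ)
      ↔ (D 0 0 < -(D 0 1) ∧ D 1 1 < -(D 0 1))) ∧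
    (∀ ρ, IsDist2 ρ → ∀ ι κ : Fin 2, ι ≠ κ →
      ρ 0 ι = 0 → ρ 1 ι = 0 → 0 < vel2 x K ρ 0 ι κ → 0 < vel2 x K ρ 1 ι κ →
        ρ 0 κ = 1 ∧ ρ 1 κ = 1) ∧
    ((D 0 0 < -(D 0 1) ∧ D 1 1 < -(D 0 1)) →
      ∀ ι κ : Fin 2, ι ≠ κ →
        ∃ ρ, IsDist2 ρ ∧ ρ 0 ι = 0 ∧ ρ 1 ι = 0 ∧
          0 < vel2 x K ρ 0 ι κ ∧ 0 < vel2 x K ρ 1 ι κ) := by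
  have hD10 : D 1 0 = D 0 1 := by rw [hD, hD, hK12, hK12]
  have hvel : ∀ ρ ι κ, ι ≠ κ → (∀ k, ρ k ι = 0) → (∀ k, ρ k κ = 1) →
      vel2 x K ρ 0 ι κ = -(D 0 0 + D 0 1) ∧ vel2 x K ρ 1 ι κ = -(D 0 1 + D 1 1) := by
    intro ρ ι κ hικ hι hκ
    simp only [vel2_of_aggregated hKsym hKdiag hικ hι hκ, Fin.sum_univ_two, ← hD, hD10,
      and_self]
  have hexists : D 0 0 < -(D 0 1) ∧ D 1 1 < -(D 0 1) → ∀ ι κ : Fin 2, ι ≠ κ →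
      ∃ ρ, IsDist2 ρ ∧ ρ 0 ι = 0 ∧ ρ 1 ι = 0 ∧
        0 < vel2 x K ρ 0 ι κ ∧ 0 < vel2 x K ρ 1 ι κ := by
    rintro ⟨h0, h1⟩ ι κ hικ
    let ρ : Fin 2 → Fin 2 → ℝ := fun _ => Pi.single κ 1
    have hι : ∀ k, ρ k ι = 0 := fun _ => Pi.single_eq_of_ne hικ _
    obtain ⟨hv0, hv1⟩ := hvel ρ ι κ hικ hι fun _ => Pi.single_eq_same κ 1
    exact ⟨ρ, isDist2_single κ, hι 0, hι 1, by linarith, by linarith⟩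
  refine ⟨⟨?_, fun h => ?_⟩, fun ρ hρ ι κ hικ h0 h1 _ _ =>
    ⟨hρ.eq_one_of_eq_zero hικ h0, hρ.eq_one_of_eq_zero hικ h1⟩, hexists⟩
  · rintro ⟨ρ, hρ, ι, κ, hικ, h0, h1, hv0, hv1⟩
    have hι : ∀ k, ρ k ι = 0 := Fin.forall_fin_two.2 ⟨h0, h1⟩
    obtain ⟨hv0', hv1'⟩ := hvel ρ ι κ hικ hι fun k => hρ.eq_one_of_eq_zero hικ (hι k)
    constructor <;> linarith
  · obtain ⟨ρ, hρ, h0, h1, hv⟩ := hexists h 0 1 zero_ne_one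
    exact ⟨ρ, hρ, 0, 1, zero_ne_one, h0, h1, hv⟩

/-- Proposition 3.6 c) (coupled case): a stationary state with both species aggregated at
the same vertex `x_κ` (i.e. `ρ^{(1)}(x_ι) = ρ^{(2)}(x_ι) = 0` and `v^{(1)}_{ικ} > 0`,
`v^{(2)}_{ικ} > 0`) exists iff `D^{(11)} < −D^{(12)}` and `D^{(22)} < −D^{(12)}`; in that
case both species have full mass at `x_κ`, and both choices of the aggregation vertex
occur. -/
theorem two_point_stationary_coupled_c
    (d : ℕ) (x : Fin 2 → EuclideanSpace ℝ (Fin d)) (hx : x 0 ≠ x 1)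
    (μ : Fin 2 → ℝ) (hμ : ∀ ι, 0 < μ ι)
    (η12 : ℝ) (hη : 0 < η12)
    (K : Fin 2 → Fin 2 → EuclideanSpace ℝ (Fin d) → EuclideanSpace ℝ (Fin d) → ℝ)
    (hKsym : ∀ i k p q, K i k p q = K i k q p)
    (hK12 : ∀ p q, K 0 1 p q = K 1 0 p q)
    (hKdiag : ∀ i k : Fin 2, ∀ p q : EuclideanSpace ℝ (Fin d), K i k p p = K i k q q)
    (D : Fin 2 → Fin 2 → ℝ)
    (hD : ∀ i k, D i k = K i k (x 0) (x 0) - K i k (x 0) (x 1))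
    (hD12 : D 0 1 ≠ 0) :
    ((∃ ρ, IsDist2 ρ ∧ ∃ ι κ : Fin 2, ι ≠ κ ∧
        ρ 0 ι = 0 ∧ ρ 1 ι = 0 ∧ 0 < vel2 x K ρ 0 ι κ ∧ 0 < vel2 x K ρ 1 ι κ)
      ↔ (D 0 0 < -(D 0 1) ∧ D 1 1 < -(D 0 1))) ∧
    (∀ ρ, IsDist2 ρ → ∀ ι κ : Fin 2, ι ≠ κ →
      ρ 0 ι = 0 → ρ 1 ι = 0 → 0 < vel2 x K ρ 0 ι κ → 0 < vel2 x K ρ 1 ι κ →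
        ρ 0 κ = 1 ∧ ρ 1 κ = 1) ∧
    ((D 0 0 < -(D 0 1) ∧ D 1 1 < -(D 0 1)) →
      ∀ ι κ : Fin 2, ι ≠ κ →
        ∃ ρ, IsDist2 ρ ∧ ρ 0 ι = 0 ∧ ρ 1 ι = 0 ∧
          0 < vel2 x K ρ 0 ι κ ∧ 0 < vel2 x K ρ 1 ι κ) :=
  two_point_stationary_coupled_c_general d x K hKsym hK12 hKdiag D hD
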